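/- arXiv:2207.14113 — 5 statements merged into one kernel-verified Lean document; each statement's English description precedes it below -/
import Mathlib

section
/- Let q be a prime power and let n be an odd prime. The Galois group of the polynomial x^{q^n} + t·x over the rational function field F_q(t) (equivalently, of x^{q^n - 1} + t) is isomorphic to ΓL(1, q^n), i.e., to the semidirect product of the unit group (F_{q^n})^× by the Galois group Gal(F_{q^n}/F_q) (a cyclic group of order n generated by the q-power Frobenius), acting naturally; in particular it has order n(q^n − 1). -/
/-!
Put `t = -s^(q^n - 1)`, so that `F_q(t) ⊆ F_{q^n}(s)`. Then
`x^(q^n) + t x = x^(q^n) - s^(q^n - 1) x` has the `q^n` distinct roots `e s` (`e ∈ F_{q^n}`),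
and `F_{q^n}(s)` is its splitting field. An automorphism `σ` over `F_q(t)` fixes `s^(q^n - 1)`,
so `σ s / s` is a `(q^n - 1)`-th root of unity, i.e. a constant `u`; and `σ` preserves the
constants, which are the solutions of `x^(q^n) = x`, acting on them by some
`φ ∈ Gal(F_{q^n}/F_q)`. Conversely each `(u, φ)` gives the automorphism `s ↦ u s` twisted by `φ`
on coefficients, and composing two of them multiplies the pairs as in `ΓL(1, q^n)`.
-/

open scoped Polynomial

/-- The natural action of the relative automorphism group `Gal(E/F_q)` on the
unit group `Eˣ`, used to form the semidirect product `ΓL(1, qⁿ) = Eˣ ⋊ Gal(E/F_q)`. -/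
def galOnUnits (Fq E : Type*) [Field Fq] [Field E] [Algebra Fq E] :
    (E ≃ₐ[Fq] E) →* MulAut Eˣ where
  toFun σ := Units.mapEquiv σ.toRingEquiv.toMulEquiv
  map_one' := by ext u; rfl
  map_mul' σ τ := by ext u; rfl

open scoped RatFunc

@[simp]
theorem galOnUnits_apply_coe {K E : Type*} [Field K] [Field E] [Algebra K E] (φ : E ≃ₐ[K] E)
    (u : Eˣ) : ((galOnUnits K E φ u : Eˣ) : E) = φ u :=
  rfl

namespace Polynomial

theorem eval₂RingHom_C_comp_injective {K L : Type*} [Field K] [Field L] (φ : K →+* L)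
    {g : L[X]} (hg : 0 < g.natDegree) : Function.Injective (eval₂RingHom (C.comp φ) g) := by
  refine (injective_iff_map_eq_zero _).mpr fun p hp => ?_
  rw [coe_eval₂RingHom, ← eval₂_map, ← comp, comp_eq_zero_iff] at hp
  obtain hp | ⟨-, hg'⟩ := hp
  · exact (Polynomial.map_eq_zero_iff φ.injective).mp hp
  · rw [hg', natDegree_C] at hg
    exact absurd hg (lt_irrefl 0)

theorem natDegree_C_mul_X_pos {R : Type*} [Semiring R] {a : R} (ha : a ≠ 0) :
    0 < (C a * X).natDegree := by
  rw [natDegree_C_mul_X a ha]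
  exact one_pos

end Polynomial

namespace FiniteField

open Polynomial

variable {E L : Type*} [Field E] [Fintype E] [Field L] [Algebra E L]

theorem mem_range_algebraMap_of_pow_card_eq {x : L} (hx : x ^ Fintype.card E = x) :
    x ∈ (algebraMap E L).range := by
  have hsplits : (X ^ Fintype.card E - X : E[X]).Splits := by
    simpa using (isSplittingField_sub E E).splits
  exact hsplits.mem_range_of_isRoot (X_pow_card_sub_X_ne_zero E Fintype.one_lt_card)
    (by simp [hx])

theorem isRoot_X_pow_card_sub_C_mul_X (c : L) (e : E) :
    (X ^ Fintype.card E - C (c ^ (Fintype.card E - 1)) * X : L[X]).IsRoot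
      (algebraMap E L e * c) := by
  have hc : c ^ Fintype.card E = c ^ (Fintype.card E - 1) * c := by
    rw [← pow_succ, Nat.sub_add_cancel Fintype.card_pos]
  simp only [IsRoot, eval_sub, eval_pow, eval_X, eval_mul, eval_C, mul_pow, ← map_pow, pow_card,
    hc]
  ring

theorem splits_X_pow_card_sub_C_mul_X {c : L} (hc : c ≠ 0) :
    (X ^ Fintype.card E - C (c ^ (Fintype.card E - 1)) * X : L[X]).Splits := by
  classical
  set p : L[X] := X ^ Fintype.card E - C (c ^ (Fintype.card E - 1)) * X
  have hdeg : p.natDegree = Fintype.card E := by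
    rw [natDegree_sub_eq_left_of_natDegree_lt, natDegree_X_pow]
    rw [natDegree_X_pow, natDegree_C_mul_X _ (pow_ne_zero _ hc)]
    exact Fintype.one_lt_card
  have hp : p ≠ 0 := ne_zero_of_natDegree_gt (hdeg ▸ Fintype.card_pos)
  have hinj : Function.Injective fun e : E => algebraMap E L e * c :=
    fun a b h => (algebraMap E L).injective (mul_right_cancel₀ hc h)
  rw [splits_iff_card_roots]
  refine le_antisymm (card_roots' p) ?_
  calc p.natDegree = (Finset.univ.image fun e : E => algebraMap E L e * c).card := by
        rw [Finset.card_image_of_injective _ hinj, hdeg, Finset.card_univ]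
    _ ≤ p.roots.card := by
        refine Multiset.card_le_card ((Multiset.le_iff_subset (Finset.nodup _)).mpr ?_)
        intro x hx
        obtain ⟨e, -, rfl⟩ := Finset.mem_image.mp hx
        exact (mem_roots hp).mpr (isRoot_X_pow_card_sub_C_mul_X c e)

end FiniteField

namespace RatFunc

variable {K L : Type*} [Field K] [Field L]

theorem ringHom_ext {M : Type*} [Semiring M] {f g : K⟮X⟯ →+* M}
    (hC : ∀ a, f (C a) = g (C a)) (hX : f X = g X) : f = g := by
  refine IsLocalization.ringHom_ext (nonZeroDivisors K[X]) (Polynomial.ringHom_ext ?_ ?_)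
  · simpa using hC
  · simpa using hX

theorem eq_top_of_C_mem_of_X_mem {k : Type*} [Field k] [Algebra k K⟮X⟯]
    {F : IntermediateField k K⟮X⟯} (hC : ∀ a, C a ∈ F) (hX : X ∈ F) : F = ⊤ := by
  refine eq_top_iff.mpr fun x _ => ?_
  have hx : x ∈ (IntermediateField.adjoin K {(X : K⟮X⟯)}).toSubfield := by
    rw [adjoin_X]; trivial
  rw [IntermediateField.adjoin_toSubfield] at hx
  refine Subfield.closure_le (t := F.toSubfield) |>.mpr (Set.union_subset ?_ ?_) hx
  · rintro _ ⟨a, rfl⟩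
    exact hC a
  · simpa using hX

noncomputable def subst (φ : K →+* L) (g : L[X]) (hg : 0 < g.natDegree) : K⟮X⟯ →+* L⟮X⟯ :=
  liftRingHom ((algebraMap L[X] L⟮X⟯).comp (Polynomial.eval₂RingHom (Polynomial.C.comp φ) g)) <|
    nonZeroDivisors_le_comap_nonZeroDivisors_of_injective _ <|
      (algebraMap_injective L).comp (Polynomial.eval₂RingHom_C_comp_injective φ hg)

variable (φ : K →+* L) (g : L[X]) (hg : 0 < g.natDegree)

@[simp]
theorem subst_C (a : K) : subst φ g hg (C a) = C (φ a) := by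
  simp [subst, ← algebraMap_C, liftRingHom_algebraMap]

@[simp]
theorem subst_X : subst φ g hg X = algebraMap L[X] L⟮X⟯ g := by
  simp [subst, ← algebraMap_X, liftRingHom_algebraMap]

end RatFunc

namespace GammaL

open Polynomial

variable (K E : Type*) [Field K] [Field E] [Fintype E] [Algebra K E]

theorem natDegree_neg_X_pow_card_sub_one_pos :
    0 < (-X ^ (Fintype.card E - 1) : E[X]).natDegree := by
  rw [natDegree_neg, natDegree_X_pow]
  exact Nat.sub_pos_of_lt Fintype.one_lt_card

noncomputable abbrev ratFuncAlgebra : Algebra K⟮X⟯ E⟮X⟯ :=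
  (RatFunc.subst (algebraMap K E) (-X ^ (Fintype.card E - 1))
    (natDegree_neg_X_pow_card_sub_one_pos E)).toAlgebra

attribute [local instance] ratFuncAlgebra

theorem algebraMap_C (a : K) :
    algebraMap K⟮X⟯ E⟮X⟯ (RatFunc.C a) = RatFunc.C (algebraMap K E a) :=
  RatFunc.subst_C ..

theorem algebraMap_X : algebraMap K⟮X⟯ E⟮X⟯ RatFunc.X = -RatFunc.X ^ (Fintype.card E - 1) :=
  (RatFunc.subst_X ..).trans (by simp)

variable {K E}

theorem subst_comp_algebraMap (u : Eˣ) (φ : E ≃ₐ[K] E) :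
    (RatFunc.subst (φ : E →+* E) _ (natDegree_C_mul_X_pos u.ne_zero)).comp (algebraMap K⟮X⟯ E⟮X⟯) =
      algebraMap K⟮X⟯ E⟮X⟯ := by
  refine RatFunc.ringHom_ext (fun a => ?_) ?_
  · simp [algebraMap_C]
  · simp only [RingHom.comp_apply, algebraMap_X, map_neg, map_pow, RatFunc.subst_X, map_mul,
      RatFunc.algebraMap_C, RatFunc.algebraMap_X, mul_pow]
    rw [← map_pow, FiniteField.pow_card_sub_one_eq_one _ u.ne_zero, map_one, one_mul]

noncomputable def autRatFunc (u : Eˣ) (φ : E ≃ₐ[K] E) : E⟮X⟯ →ₐ[K⟮X⟯] E⟮X⟯ where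
  toRingHom := RatFunc.subst (φ : E →+* E) _ (natDegree_C_mul_X_pos u.ne_zero)
  commutes' := DFunLike.congr_fun (subst_comp_algebraMap u φ)

@[simp]
theorem autRatFunc_C (u : Eˣ) (φ : E ≃ₐ[K] E) (a : E) :
    autRatFunc u φ (RatFunc.C a) = RatFunc.C (φ a) :=
  RatFunc.subst_C _ _ (natDegree_C_mul_X_pos u.ne_zero) a

@[simp]
theorem autRatFunc_X (u : Eˣ) (φ : E ≃ₐ[K] E) :
    autRatFunc u φ RatFunc.X = RatFunc.C (u : E) * RatFunc.X :=
  (RatFunc.subst_X _ _ (natDegree_C_mul_X_pos u.ne_zero)).trans (by simp)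

theorem algHom_ext {f g : E⟮X⟯ →ₐ[K⟮X⟯] E⟮X⟯} (hC : ∀ a, f (RatFunc.C a) = g (RatFunc.C a))
    (hX : f RatFunc.X = g RatFunc.X) : f = g :=
  AlgHom.coe_ringHom_injective (RatFunc.ringHom_ext hC hX)

variable (K E) in
noncomputable def toEnd : Eˣ ⋊[galOnUnits K E] (E ≃ₐ[K] E) →* (E⟮X⟯ →ₐ[K⟮X⟯] E⟮X⟯) where
  toFun g := autRatFunc g.left g.right
  map_one' := algHom_ext (by simp) (by simp)
  map_mul' g h := algHom_ext (by simp) (by simp; ring)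

variable (K E) in
noncomputable def toAut : Eˣ ⋊[galOnUnits K E] (E ≃ₐ[K] E) →* (E⟮X⟯ ≃ₐ[K⟮X⟯] E⟮X⟯) :=
  (AlgEquiv.algHomUnitsEquiv _ _).toMonoidHom.comp (toEnd K E).toHomUnits

theorem toAut_apply (g : Eˣ ⋊[galOnUnits K E] (E ≃ₐ[K] E)) (x : E⟮X⟯) :
    toAut K E g x = autRatFunc g.left g.right x :=
  rfl

theorem toAut_injective : Function.Injective (toAut K E) := by
  refine (injective_iff_map_eq_one _).mpr fun g hg => ?_
  have hX : RatFunc.C (g.left : E) * RatFunc.X = 1 * RatFunc.X := by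
    simpa [toAut_apply] using congr($hg RatFunc.X)
  have hC (a : E) : RatFunc.C (g.right a) = RatFunc.C a := by
    simpa [toAut_apply] using congr($hg (RatFunc.C a))
  refine SemidirectProduct.ext (Units.ext ?_) (AlgEquiv.ext fun a => RatFunc.C_injective (hC a))
  exact RatFunc.C_injective (by simpa using mul_right_cancel₀ RatFunc.X_ne_zero hX)

theorem exists_algEquiv_map_C (σ : E⟮X⟯ ≃ₐ[K⟮X⟯] E⟮X⟯) :
    ∃ φ : E ≃ₐ[K] E, ∀ a, σ (RatFunc.C a) = RatFunc.C (φ a) := by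
  have hmem (a : E) : σ (RatFunc.C a) ∈ (RatFunc.C : E →+* E⟮X⟯).fieldRange := by
    rw [RingHom.mem_fieldRange, ← RingHom.mem_range, ← RatFunc.algebraMap_eq_C]
    exact FiniteField.mem_range_algebraMap_of_pow_card_eq
      (by rw [← map_pow, ← map_pow, FiniteField.pow_card])
  let φ : E →+* E := (RatFunc.C : E →+* E⟮X⟯).rangeRestrictFieldEquiv.symm.toRingHom.comp
    (((σ : E⟮X⟯ →+* E⟮X⟯).comp RatFunc.C).codRestrict _ hmem)
  have hφ (a : E) : RatFunc.C (φ a) = σ (RatFunc.C a) :=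
    RingHom.rangeRestrictFieldEquiv_apply_symm_apply _ _
  have hcomm (k : K) : φ (algebraMap K E k) = algebraMap K E k := by
    apply RatFunc.C_injective
    rw [hφ, ← algebraMap_C, AlgEquiv.commutes, algebraMap_C]
  exact ⟨AlgEquiv.ofBijective ⟨φ, hcomm⟩ (Finite.injective_iff_bijective.mp φ.injective),
    fun a => (hφ a).symm⟩

theorem exists_unit_map_X (σ : E⟮X⟯ ≃ₐ[K⟮X⟯] E⟮X⟯) :
    ∃ u : Eˣ, σ RatFunc.X = RatFunc.C (u : E) * RatFunc.X := by
  have hX : RatFunc.X ≠ (0 : E⟮X⟯) := RatFunc.X_ne_zero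
  have hσX : σ RatFunc.X ^ (Fintype.card E - 1) = RatFunc.X ^ (Fintype.card E - 1) := by
    simpa [algebraMap_X] using σ.commutes RatFunc.X
  set v := σ RatFunc.X / RatFunc.X with hv
  have hv1 : v ^ (Fintype.card E - 1) = 1 := by
    rw [hv, div_pow, hσX, div_self (pow_ne_zero _ hX)]
  obtain ⟨a, ha⟩ := FiniteField.mem_range_algebraMap_of_pow_card_eq (E := E) (x := v) (by
    rw [← Nat.sub_add_cancel Fintype.card_pos, pow_succ, hv1, one_mul])
  have hv0 : v ≠ 0 := div_ne_zero ((map_ne_zero σ).mpr hX) hX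
  have ha0 : a ≠ 0 := fun h => hv0 (by rw [← ha, h, map_zero])
  refine ⟨Units.mk0 a ha0, ?_⟩
  simp [← RatFunc.algebraMap_eq_C, ha, hv, hX]

theorem toAut_surjective : Function.Surjective (toAut K E) := by
  intro σ
  obtain ⟨u, hu⟩ := exists_unit_map_X σ
  obtain ⟨φ, hφ⟩ := exists_algEquiv_map_C σ
  refine ⟨⟨u, φ⟩, AlgEquiv.coe_toAlgHom_injective (algHom_ext (fun a => ?_) ?_)⟩
  · simp [toAut_apply, hφ]
  · simp [toAut_apply, hu]

variable (K E)

noncomputable def mulEquivAut : Eˣ ⋊[galOnUnits K E] (E ≃ₐ[K] E) ≃* (E⟮X⟯ ≃ₐ[K⟮X⟯] E⟮X⟯) :=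
  MulEquiv.ofBijective (toAut K E) ⟨toAut_injective, toAut_surjective⟩

theorem map_X_pow_card_add_C_X_mul_X :
    (X ^ Fintype.card E + C RatFunc.X * X : K⟮X⟯[X]).map (algebraMap K⟮X⟯ E⟮X⟯) =
      X ^ Fintype.card E - C (RatFunc.X ^ (Fintype.card E - 1)) * X := by
  simp [algebraMap_X, sub_eq_add_neg]

instance isSplittingField :
    IsSplittingField K⟮X⟯ E⟮X⟯ (X ^ Fintype.card E + C RatFunc.X * X) := by
  set f : K⟮X⟯[X] := X ^ Fintype.card E + C RatFunc.X * X
  have hsplits : (f.map (algebraMap K⟮X⟯ E⟮X⟯)).Splits := by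
    rw [map_X_pow_card_add_C_X_mul_X]
    exact FiniteField.splits_X_pow_card_sub_C_mul_X RatFunc.X_ne_zero
  have hmonic : f.Monic := monic_X_pow_add
    ((degree_C_mul_X_le _).trans_lt (by exact_mod_cast Fintype.one_lt_card))
  have hroot (a : E) :
      RatFunc.C a * RatFunc.X ∈ IntermediateField.adjoin K⟮X⟯ (f.rootSet E⟮X⟯) := by
    refine IntermediateField.subset_adjoin _ _ (mem_rootSet'.mpr ⟨map_monic_ne_zero hmonic, ?_⟩)
    rw [aeval_def, eval₂_eq_eval_map, map_X_pow_card_add_C_X_mul_X]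
    simpa using FiniteField.isRoot_X_pow_card_sub_C_mul_X (RatFunc.X : E⟮X⟯) a
  have hX : RatFunc.X ∈ IntermediateField.adjoin K⟮X⟯ (f.rootSet E⟮X⟯) := by
    simpa using hroot 1
  refine isSplittingField_iff_intermediateField.mpr ⟨hsplits,
    RatFunc.eq_top_of_C_mem_of_X_mem (fun a => ?_) hX⟩
  simpa [RatFunc.X_ne_zero] using IntermediateField.div_mem _ (hroot a) hX

noncomputable def galMulEquiv :
    (X ^ Fintype.card E + C RatFunc.X * X : K⟮X⟯[X]).Gal ≃* Eˣ ⋊[galOnUnits K E] (E ≃ₐ[K] E) :=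
  (AlgEquiv.autCongr (IsSplittingField.algEquiv E⟮X⟯ _)).symm.trans (mulEquivAut K E).symm

end GammaL

theorem galoisGroup_X_pow_add_tX_eq_gammaL_general
    (q n : ℕ) (Fq : Type) [Field Fq] [Fintype Fq]
    (hq : Fintype.card Fq = q)
    (E : Type) [Field E] [Fintype E] [Algebra Fq E]
    (hE : Fintype.card E = q ^ n) :
    Nonempty
      (((Polynomial.X ^ q ^ n + Polynomial.C (RatFunc.X : RatFunc Fq) * Polynomial.X :
          Polynomial (RatFunc Fq)).Gal) ≃*
        (Eˣ ⋊[galOnUnits Fq E] (E ≃ₐ[Fq] E))) ∧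
    Nat.card ((Polynomial.X ^ q ^ n + Polynomial.C (RatFunc.X : RatFunc Fq) * Polynomial.X :
        Polynomial (RatFunc Fq)).Gal) = n * (q ^ n - 1) := by
  have hfinrank : Module.finrank Fq E = n := by
    have hcard := Module.card_eq_pow_finrank (K := Fq) (V := E)
    rw [hq, hE] at hcard
    exact (Nat.pow_right_injective (hq ▸ Fintype.one_lt_card) hcard).symm
  rw [← hE]
  refine ⟨⟨GammaL.galMulEquiv Fq E⟩, ?_⟩
  rw [Nat.card_congr (GammaL.galMulEquiv Fq E).toEquiv, SemidirectProduct.card, Nat.card_units,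
    Nat.card_eq_fintype_card, IsGalois.card_aut_eq_finrank, hfinrank, mul_comm]

/-- Let `q` be a prime power and `n` an odd prime. The Galois group of
`x^(qⁿ) + t·x` over `F_q(t)` is isomorphic to `ΓL(1, qⁿ)`, i.e. to the semidirect product
of `(F_{qⁿ})ˣ` by `Gal(F_{qⁿ}/F_q)` acting naturally; in particular it has order
`n·(qⁿ − 1)`. -/
theorem galoisGroup_X_pow_add_tX_eq_gammaL
    (q n : ℕ) (Fq : Type) [Field Fq] [Fintype Fq]
    (hq : Fintype.card Fq = q)
    (hn : n.Prime) (hnodd : Odd n)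
    (E : Type) [Field E] [Fintype E] [Algebra Fq E]
    (hE : Fintype.card E = q ^ n) :
    Nonempty
      (((Polynomial.X ^ q ^ n + Polynomial.C (RatFunc.X : RatFunc Fq) * Polynomial.X :
          Polynomial (RatFunc Fq)).Gal) ≃*
        (Eˣ ⋊[galOnUnits Fq E] (E ≃ₐ[Fq] E))) ∧
    Nat.card ((Polynomial.X ^ q ^ n + Polynomial.C (RatFunc.X : RatFunc Fq) * Polynomial.X :
        Polynomial (RatFunc Fq)).Gal) = n * (q ^ n - 1) :=
  galoisGroup_X_pow_add_tX_eq_gammaL_general q n Fq hq E hE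
end

section
/- Let q be a prime power and n ≥ 1. Regard the finite field F_{q^n} as an n-dimensional vector space over F_q. Let z be a generator of the cyclic group (F_{q^n})^×, let C be the cyclic subgroup of the group G of F_q-linear automorphisms of F_{q^n} generated by multiplication by z, and let N(C) be the normalizer of C in G. If w ∈ N(C) fixes some nonzero vector v ∈ F_{q^n}, then the order of w divides n. -/
/-!
An automorphism `w` normalizing the Singer cycle normalizes all of `Eˣ` (acting by
multiplication), so `w (a * b) = a' * w b` where `a'` depends only on `a`. Hence
`x ↦ (w 1)⁻¹ * w x` is a field automorphism `σ` of `E` over `F_q`, and `w x = w 1 * σ x`.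
Iterating, `w ^ n = d * σ ^ n = d` for a constant `d`, because the Galois group has order `n`;
a nonzero fixed vector forces `d = 1`.
-/

section LmulUnits

variable (K E : Type*) [CommSemiring K] [Field E] [Algebra K E]

def lmulUnits : Eˣ →* (Module.End K E)ˣ :=
  Units.map (Algebra.lmul K E).toRingHom.toMonoidHom

variable {K E}

@[simp]
theorem lmulUnits_apply (u : Eˣ) (x : E) : (lmulUnits K E u : Module.End K E) x = u * x :=
  rfl

theorem zpowers_lmulUnits_eq_range {z : Eˣ} (hz : ∀ u : Eˣ, u ∈ Subgroup.zpowers z) :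
    Subgroup.zpowers (lmulUnits K E z) = (lmulUnits K E).range := by
  rw [← MonoidHom.map_zpowers, (Subgroup.eq_top_iff' _).mpr hz, MonoidHom.range_eq_map]

theorem apply_one_mul_apply_mul_of_mem_normalizer {w : (Module.End K E)ˣ}
    (hw : w ∈ Subgroup.normalizer ((lmulUnits K E).range : Set (Module.End K E)ˣ)) (a b : E) :
    (w : Module.End K E) 1 * (w : Module.End K E) (a * b) =
      (w : Module.End K E) a * (w : Module.End K E) b := by
  rcases eq_or_ne a 0 with rfl | ha
  · simp
  obtain ⟨a', ha'⟩ : w * lmulUnits K E (Units.mk0 a ha) * w⁻¹ ∈ (lmulUnits K E).range :=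
    (Subgroup.mem_normalizer_iff.mp hw _).mp ⟨_, rfl⟩
  have hcomm : w * lmulUnits K E (Units.mk0 a ha) = lmulUnits K E a' * w := by
    rw [ha', inv_mul_cancel_right]
  have happly (x : E) : (w : Module.End K E) (a * x) = a' * (w : Module.End K E) x := by
    simpa using congr(($hcomm : Module.End K E) x)
  rw [happly, ← mul_one a, happly]
  ring

theorem exists_algEquiv_apply_eq_mul {f : Module.End K E} (hf : Function.Bijective f)
    (hmul : ∀ a b, f 1 * f (a * b) = f a * f b) :
    ∃ σ : E ≃ₐ[K] E, ∀ x, f x = f 1 * σ x := by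
  have hf1 : f 1 ≠ 0 := by simpa using hf.injective.ne (one_ne_zero (α := E))
  let φ : E →ₐ[K] E :=
    { toFun x := (f 1)⁻¹ * f x
      map_one' := inv_mul_cancel₀ hf1
      map_mul' a b := by field_simp; rw [hmul]
      map_zero' := by simp
      map_add' a b := by simp [mul_add]
      commutes' r := by
        simp [Algebra.algebraMap_eq_smul_one, inv_mul_cancel₀ hf1] }
  have hφ : Function.Bijective φ :=
    (mulLeft_bijective₀ _ (inv_ne_zero hf1)).comp hf
  exact ⟨AlgEquiv.ofBijective φ hφ, fun x => by simp [φ, hf1]⟩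

theorem exists_pow_apply_eq_mul_pow_apply {f : Module.End K E} {σ : E ≃ₐ[K] E} {c : E}
    (hf : ∀ x, f x = c * σ x) (k : ℕ) : ∃ d : E, ∀ x, (f ^ k) x = d * (σ ^ k) x := by
  induction k with
  | zero => exact ⟨1, by simp⟩
  | succ k ih =>
    obtain ⟨d, hd⟩ := ih
    refine ⟨d * (σ ^ k) c, fun x => ?_⟩
    rw [pow_succ, Module.End.mul_apply, hd, hf, map_mul, pow_succ, AlgEquiv.mul_apply]
    ring

theorem pow_eq_one_of_apply_eq_mul {f : Module.End K E} {σ : E ≃ₐ[K] E} {c : E} {n : ℕ}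
    (hf : ∀ x, f x = c * σ x) (hσ : σ ^ n = 1) {v : E} (hv : v ≠ 0) (hfix : f v = v) :
    f ^ n = 1 := by
  obtain ⟨d, hd⟩ := exists_pow_apply_eq_mul_pow_apply hf n
  simp only [hσ, AlgEquiv.one_apply] at hd
  have hd1 : d = 1 := by
    have hpow : (f ^ n) v = v := by
      rw [Module.End.pow_apply, Function.iterate_fixed hfix]
    exact mul_right_cancel₀ hv (by rw [← hd, hpow, one_mul])
  ext x
  simp [hd, hd1]

end LmulUnits

theorem normalizer_of_singer_fixed_point_order_dvd_general
    (q n : ℕ)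
    (Fq : Type) [Field Fq] [Fintype Fq] (hq : Fintype.card Fq = q)
    (E : Type) [Field E] [Fintype E] [Algebra Fq E] (hE : Fintype.card E = q ^ n)
    (z : Eˣ) (hz : ∀ u : Eˣ, u ∈ Subgroup.zpowers z)
    (w : (Module.End Fq E)ˣ)
    (hw : w ∈ Subgroup.normalizer ((Subgroup.zpowers
        (Units.map (Algebra.lmul Fq E).toRingHom.toMonoidHom z) : Set (Module.End Fq E)ˣ)))
    (v : E) (hv : v ≠ 0) (hfix : (w : Module.End Fq E) v = v) :
    orderOf w ∣ n := by
  have hfinrank : Module.finrank Fq E = n := by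
    refine Nat.pow_right_injective (hq ▸ Fintype.one_lt_card) ?_
    simp only [← hq, ← Module.card_eq_pow_finrank, hE]
  change w ∈ Subgroup.normalizer (Subgroup.zpowers (lmulUnits Fq E z) : Set _) at hw
  rw [zpowers_lmulUnits_eq_range hz] at hw
  obtain ⟨σ, hσ⟩ := exists_algEquiv_apply_eq_mul
    ((Module.End.isUnit_iff _).mp w.isUnit) (apply_one_mul_apply_mul_of_mem_normalizer hw)
  have hσn : σ ^ n = 1 := by
    rw [← hfinrank, ← IsGalois.card_aut_eq_finrank, Nat.card_eq_fintype_card]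
    exact pow_card_eq_one
  refine orderOf_dvd_of_pow_eq_one (Units.ext ?_)
  rw [Units.val_pow_eq_pow_val]
  exact pow_eq_one_of_apply_eq_mul hσ hσn hv hfix

/-- Regard `F_{qⁿ}` (a field `E` with `qⁿ` elements) as an `n`-dimensional
vector space over `F_q`. Let `z` be a generator of `Eˣ`, let `C` be the cyclic subgroup of
the group of `F_q`-linear automorphisms of `E` generated by multiplication by `z`, and let
`N(C)` be its normalizer. If `w ∈ N(C)` fixes some nonzero vector `v ∈ E`, then the order
of `w` divides `n`. -/
theorem normalizer_of_singer_fixed_point_order_dvd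
    (q n : ℕ) (hn : 1 ≤ n)
    (Fq : Type) [Field Fq] [Fintype Fq] (hq : Fintype.card Fq = q)
    (E : Type) [Field E] [Fintype E] [Algebra Fq E] (hE : Fintype.card E = q ^ n)
    (z : Eˣ) (hz : ∀ u : Eˣ, u ∈ Subgroup.zpowers z)
    (w : (Module.End Fq E)ˣ)
    (hw : w ∈ Subgroup.normalizer ((Subgroup.zpowers
        (Units.map (Algebra.lmul Fq E).toRingHom.toMonoidHom z) : Set (Module.End Fq E)ˣ)))
    (v : E) (hv : v ≠ 0) (hfix : (w : Module.End Fq E) v = v) :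
    orderOf w ∣ n :=
  normalizer_of_singer_fixed_point_order_dvd_general q n Fq hq E hE z hz w hw v hv hfix
end

section
/- Let q be a power of an odd prime p and let L(x) be a monic q-linearized polynomial of q-degree n ≥ 1 in F_q(t)[x]. Let G(x) = L(x)/x (a polynomial of degree q^n − 1) and suppose the constant term c of G is nonzero. Then the discriminant of G equals (−1)^{(q^n − 1)/2} · c modulo squares in F_q(t); that is, there exists a nonzero s ∈ F_q(t) with disc(G) = (−1)^{(q^n − 1)/2} · c · s^2. -/
/-!
Write `L = X · G`. In characteristic `p` every `X ^ (qⁱ)` with `i ≥ 1` has zero derivative,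
so `L' = a₀`, i.e. `X · G' + G = a₀`. Hence every root `α` of `G` satisfies
`α · G'(α) = a₀`. The `m = qⁿ - 1` roots have product `a₀` (as `m` is even), so
`∏ G'(α) = a₀ ^ (m - 1)`: an odd power of `a₀`, that is, `a₀` times a square. The sign
`(-1) ^ (m (m - 1) / 2)` reduces to `(-1) ^ (m / 2)`.
-/

/-- The discriminant of a monic polynomial `g` of degree `m`, computed in its splitting
field: `(−1)^(m(m−1)/2) · ∏ g'(αᵢ)`, the product running over the roots `αᵢ` of `g`
(with multiplicity) in the splitting field. -/
noncomputable def polyDisc {K : Type*} [Field K] (g : Polynomial K) : g.SplittingField :=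
  (-1) ^ (g.natDegree * (g.natDegree - 1) / 2) *
    ((g.aroots g.SplittingField).map
      (fun α => Polynomial.aeval α (Polynomial.derivative g))).prod

open Polynomial Finset

theorem Even.neg_one_pow_mul_sub_one_div_two {R : Type*} [Monoid R] [HasDistribNeg R] {m : ℕ}
    (hm : Even m) : (-1 : R) ^ (m * (m - 1) / 2) = (-1) ^ (m / 2) := by
  obtain ⟨k, rfl⟩ := hm
  rcases Nat.eq_zero_or_pos k with rfl | hk
  · rfl
  have hodd : Odd (2 * k - 1) := ⟨k - 1, by omega⟩
  rw [← two_mul, Nat.mul_div_cancel_left _ two_pos, mul_assoc, Nat.mul_div_cancel_left _ two_pos,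
    pow_mul', hodd.neg_one_pow]

section Linearized

variable {R : Type*} [CommRing R]

theorem X_mul_derivative_C_mul_X_pow_add (b : R) (k : ℕ) :
    X * derivative (C b * X ^ k) + C b * X ^ k = C (b * (k + 1)) * X ^ k := by
  rcases k with _ | k
  · simp
  · rw [derivative_C_mul_X_pow, C_mul, C_mul, C_add, C_1]
    simp only [Nat.add_sub_cancel, pow_succ' X k, map_natCast]
    ring

/-- `L(x)/x` for the `q`-polynomial `L(x) = ∑_{i ≤ n} aᵢ x^(qⁱ)`. -/
noncomputable def linearizedDivX (q n : ℕ) (a : ℕ → R) : R[X] :=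
  ∑ i ∈ range (n + 1), C (a i) * X ^ (q ^ i - 1)

theorem X_mul_derivative_linearizedDivX_add {q : ℕ} (hq : q ≠ 0) (hqR : (q : R) = 0)
    (n : ℕ) (a : ℕ → R) :
    X * derivative (linearizedDivX q n a) + linearizedDivX q n a = C (a 0) := by
  rw [linearizedDivX, derivative_sum, mul_sum, ← sum_add_distrib, sum_range_succ']
  have hcast (i : ℕ) : ((q ^ i - 1 : ℕ) : R) + 1 = (q : R) ^ i := by
    rw [← Nat.cast_add_one, Nat.sub_add_cancel (Nat.one_le_pow _ _ (Nat.pos_of_ne_zero hq)),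
      Nat.cast_pow]
  simp only [X_mul_derivative_C_mul_X_pow_add, hcast]
  simp [hqR]

theorem degree_sum_range_C_mul_X_pow_sub_one_lt {q : ℕ} (hq : 1 < q) (n : ℕ) (a : ℕ → R) :
    (∑ i ∈ range n, C (a i) * X ^ (q ^ i - 1)).degree < ((q ^ n - 1 : ℕ) : WithBot ℕ) := by
  refine (degree_sum_le _ _).trans_lt ((Finset.sup_lt_iff (WithBot.bot_lt_coe _)).2 fun i hi ↦ ?_)
  have := Nat.pow_lt_pow_right hq (mem_range.1 hi)
  have := Nat.one_le_pow i q (by omega)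
  exact (degree_C_mul_X_pow_le _ _).trans_lt (by exact_mod_cast (by omega : q ^ i - 1 < q ^ n - 1))

theorem linearizedDivX_eq_sum_add_X_pow {q n : ℕ} {a : ℕ → R} (ha : a n = 1) :
    linearizedDivX q n a = ∑ i ∈ range n, C (a i) * X ^ (q ^ i - 1) + X ^ (q ^ n - 1) := by
  rw [linearizedDivX, sum_range_succ, ha, C_1, one_mul]

variable [Nontrivial R]

theorem linearizedDivX_monic {q n : ℕ} (hq : 1 < q) {a : ℕ → R} (ha : a n = 1) :
    (linearizedDivX q n a).Monic := by
  rw [linearizedDivX_eq_sum_add_X_pow ha]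
  exact (monic_X_pow _).add_of_right
    (by rw [degree_X_pow]; exact degree_sum_range_C_mul_X_pow_sub_one_lt hq n a)

theorem natDegree_linearizedDivX {q n : ℕ} (hq : 1 < q) {a : ℕ → R} (ha : a n = 1) :
    (linearizedDivX q n a).natDegree = q ^ n - 1 := by
  rw [linearizedDivX_eq_sum_add_X_pow ha, natDegree_add_eq_right_of_degree_lt
    (by rw [degree_X_pow]; exact degree_sum_range_C_mul_X_pow_sub_one_lt hq n a), natDegree_X_pow]

end Linearized

section Discriminant

variable {K : Type*} [Field K] {g : K[X]} {c : K}

theorem prod_aeval_derivative_aroots_of_X_mul_derivative_add_eq_C {L : Type*} [Field L]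
    [Algebra K L] (hg : g.Monic) (hsplit : (g.map (algebraMap K L)).Splits) (hc : c ≠ 0)
    (h : X * derivative g + g = C c) :
    ((g.aroots L).map fun α ↦ aeval α (derivative g)).prod =
      (-1) ^ g.natDegree * algebraMap K L c ^ (g.natDegree - 1) := by
  have hcoeff : g.coeff 0 = c := by
    simpa using congrArg (coeff · 0) h
  have hroot (α) (hα : α ∈ g.aroots L) : α * aeval α (derivative g) = algebraMap K L c := by
    have := congrArg (aeval α) h
    rwa [map_add, map_mul, aeval_X, (mem_aroots.1 hα).2, add_zero, aeval_C] at this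
  have hprod : (g.aroots L).prod = (-1) ^ g.natDegree * algebraMap K L c := by
    have := hsplit.coeff_zero_eq_prod_roots_of_monic (hg.map _)
    rw [coeff_map, hcoeff, hg.natDegree_map] at this
    rw [this, ← mul_assoc, ← mul_pow, neg_one_mul, neg_neg, one_pow, one_mul]
  have hcard : Multiset.card (g.aroots L) = g.natDegree := by
    rw [← hg.natDegree_map (algebraMap K L)]
    exact splits_iff_card_roots.1 hsplit
  have hpow : algebraMap K L c ^ g.natDegree =
      algebraMap K L c * algebraMap K L c ^ (g.natDegree - 1) := by
    rcases Nat.eq_zero_or_pos g.natDegree with hm | hm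
    · have hc1 : c = 1 := by rw [← hcoeff, ← hm, ← hg.leadingCoeff]; rfl
      simp [hm, hc1]
    · rw [← pow_succ', Nat.sub_add_cancel hm]
  have key : algebraMap K L c *
      ((-1) ^ g.natDegree * ((g.aroots L).map fun α ↦ aeval α (derivative g)).prod) =
      algebraMap K L c * algebraMap K L c ^ (g.natDegree - 1) := by
    calc _ = (g.aroots L).prod * ((g.aroots L).map fun α ↦ aeval α (derivative g)).prod := by
          rw [hprod]; ring
      _ = ((g.aroots L).map fun α ↦ α * aeval α (derivative g)).prod := by
          rw [Multiset.prod_map_mul, Multiset.map_id']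
      _ = _ := by
          rw [Multiset.map_congr rfl hroot, Multiset.map_const', Multiset.prod_replicate, hcard,
            hpow]
  rw [← mul_left_cancel₀ ((_root_.map_ne_zero _).2 hc) key, ← mul_assoc, ← mul_pow,
    neg_one_mul, neg_neg, one_pow, one_mul]

theorem polyDisc_eq_of_X_mul_derivative_add_eq_C (hg : g.Monic) (hc : c ≠ 0)
    (h : X * derivative g + g = C c) :
    polyDisc g = algebraMap K g.SplittingField ((-1) ^ (g.natDegree * (g.natDegree - 1) / 2) *
      ((-1) ^ g.natDegree * c ^ (g.natDegree - 1))) := by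
  rw [polyDisc, prod_aeval_derivative_aroots_of_X_mul_derivative_add_eq_C hg
    (SplittingField.splits g) hc h]
  simp

end Discriminant

theorem discriminant_of_linearized_div_X_general
    (p q n : ℕ) (hpodd : Odd p) (hq : ∃ e : ℕ, 0 < e ∧ q = p ^ e)
    (hn : 1 ≤ n)
    (Fq : Type) [Field Fq] [Fintype Fq] (hcard : Fintype.card Fq = q)
    (a : ℕ → RatFunc Fq) (hmonic : a n = 1) (hc : a 0 ≠ 0)
    (G : Polynomial (RatFunc Fq))
    (hG : G = ∑ i ∈ Finset.range (n + 1), Polynomial.C (a i) * Polynomial.X ^ (q ^ i - 1)) :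
    ∃ s : RatFunc Fq, s ≠ 0 ∧
      polyDisc G =
        algebraMap (RatFunc Fq) G.SplittingField
          ((-1) ^ ((q ^ n - 1) / 2) * a 0 * s ^ 2) := by
  obtain ⟨e, -, hqe⟩ := hq
  have hq1 : 1 < q := hcard ▸ Fintype.one_lt_card
  have hqK : (q : RatFunc Fq) = 0 := by
    rw [← hcard, ← map_natCast (algebraMap Fq (RatFunc Fq)), FiniteField.cast_card_eq_zero,
      map_zero]
  obtain ⟨k, hk⟩ : Odd (q ^ n) := (hqe ▸ hpodd.pow).pow
  have heven : Even (q ^ n - 1) := ⟨k, by omega⟩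
  have hqn : q ≤ q ^ n := Nat.le_self_pow (by omega) q
  replace hG : G = linearizedDivX q n a := hG
  subst hG
  rw [polyDisc_eq_of_X_mul_derivative_add_eq_C (linearizedDivX_monic hq1 hmonic) hc
    (X_mul_derivative_linearizedDivX_add (by omega) hqK n a), natDegree_linearizedDivX hq1 hmonic,
    heven.neg_one_pow_mul_sub_one_div_two, heven.neg_one_pow, one_mul]
  refine ⟨a 0 ^ ((q ^ n - 3) / 2), pow_ne_zero _ hc, ?_⟩
  rw [mul_assoc, ← pow_mul, ← pow_succ', show q ^ n - 1 - 1 = (q ^ n - 3) / 2 * 2 + 1 by omega]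

/-- Let `q` be a power of an odd prime `p` and let
`L(x) = ∑_{i ≤ n} aᵢ x^(qⁱ)` be a monic `q`-linearized polynomial of `q`-degree `n ≥ 1`
over `F_q(t)`, and let `G(x) = L(x)/x = ∑_{i ≤ n} aᵢ x^(qⁱ − 1)` have nonzero constant
term `c = a₀`. Then the discriminant of `G` equals `(−1)^((qⁿ−1)/2) · c` modulo nonzero
squares of `F_q(t)`. -/
theorem discriminant_of_linearized_div_X
    (p q n : ℕ) (hp : p.Prime) (hpodd : Odd p) (hq : ∃ e : ℕ, 0 < e ∧ q = p ^ e)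
    (hn : 1 ≤ n)
    (Fq : Type) [Field Fq] [Fintype Fq] (hcard : Fintype.card Fq = q)
    (a : ℕ → RatFunc Fq) (hmonic : a n = 1) (hc : a 0 ≠ 0)
    (G : Polynomial (RatFunc Fq))
    (hG : G = ∑ i ∈ Finset.range (n + 1), Polynomial.C (a i) * Polynomial.X ^ (q ^ i - 1)) :
    ∃ s : RatFunc Fq, s ≠ 0 ∧
      polyDisc G =
        algebraMap (RatFunc Fq) G.SplittingField
          ((-1) ^ ((q ^ n - 1) / 2) * a 0 * s ^ 2) :=
  discriminant_of_linearized_div_X_general p q n hpodd hq hn Fq hcard a hmonic hc G hG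
end

section
/- Let q be a power of 2, let n ≥ 1, and suppose (q, n) ≠ (2, 2). Then every element of GL(n, q), in its natural action on the q^n − 1 nonzero vectors of F_q^n, induces an even permutation of F_q^n \ {0}. -/
/-!
Since `GL(n, q)` is generated by transvections and invertible diagonal matrices, it suffices to
show that these act evenly on `F_qⁿ`; as `0` is fixed, the action on the nonzero vectors has the
same sign. An invertible diagonal matrix has order dividing `q - 1`, which is odd. In characteristic
`2` a transvection `v ↦ v + c vⱼ eᵢ` is an involution, so its sign is `(-1) ^ (m / 2)` where
`m = qⁿ - qⁿ⁻¹` counts the vectors with `vⱼ ≠ 0`; and `4 ∣ qⁿ⁻¹` unless `(q, n) = (2, 2)`.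
-/

open Matrix Equiv Finset

namespace Equiv.Perm

variable {α : Type*} [Fintype α] [DecidableEq α]

theorem sign_of_sq_eq_one {σ : Perm α} (hσ : σ ^ 2 = 1) : sign σ = (-1) ^ (#σ.support / 2) := by
  have hσ' := cycleType_of_pow_prime_eq_one hσ
  rw [sign_of_cycleType, ← sum_cycleType, hσ', Multiset.sum_replicate, Multiset.card_replicate,
    smul_eq_mul, Nat.mul_div_cancel _ two_pos, pow_add, pow_mul]
  simp

end Equiv.Perm

theorem Int.units_eq_one_of_pow_eq_one_of_odd {u : ℤˣ} {m : ℕ} (hm : Odd m) (h : u ^ m = 1) :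
    u = 1 := by
  rwa [Int.units_pow_eq_pow_mod_two, Nat.odd_iff.mp hm, pow_one] at h

namespace Fintype

theorem card_filter_apply_ne_zero {ι M : Type*} [Fintype ι] [DecidableEq ι] [Zero M]
    [Fintype M] [DecidableEq M] (j : ι) :
    #{v : ι → M | v j ≠ 0} = card M ^ card ι - card M ^ (card ι - 1) := by
  have hzero : #{v : ι → M | v j = 0} = card M ^ (card ι - 1) := by
    simpa using card_filter_piFinset_const_eq_of_mem (univ : Finset M) j (mem_univ 0)
  have hsplit := card_filter_add_card_filter_not (s := univ) (fun v : ι → M ↦ v j = 0)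
  rw [card_univ, card_fun, hzero] at hsplit
  simp only [ne_eq]
  omega

end Fintype

theorem FiniteField.four_dvd_card_pow {K : Type*} [Field K] [Fintype K] [CharP K 2] {N : ℕ}
    (hN : 2 ≤ N) (hK : Fintype.card K ≠ 2 ∨ N ≠ 2) : 4 ∣ Fintype.card K ^ (N - 1) := by
  obtain ⟨k, -, hk⟩ := FiniteField.card K 2
  rw [hk, ← pow_mul]
  refine (pow_dvd_pow 2 ?_ : 2 ^ 2 ∣ _)
  obtain ⟨M, rfl⟩ := Nat.exists_eq_add_of_le' hN
  show 2 ≤ k * (M + 1)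
  have hk1 : 1 ≤ (k : ℕ) := k.pos
  rcases hK with hK | hK
  · have : (k : ℕ) ≠ 1 := fun h ↦ hK (by rw [hk, h, pow_one])
    nlinarith [show 2 ≤ (k : ℕ) by omega]
  · nlinarith [show 1 ≤ M by omega]

namespace Matrix

variable {n R : Type*} [Fintype n] [DecidableEq n] [CommRing R]

theorem transvection_mulVec (i j : n) (c : R) (v : n → R) :
    transvection i j c *ᵥ v = v + Pi.single i (c * v j) := by
  rw [transvection, add_mulVec, one_mulVec, single_mulVec]
  rfl

namespace GeneralLinearGroup

def toPerm : GL n R →* Perm (n → R) where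
  toFun g :=
    { toFun := ((g : Matrix n n R) *ᵥ ·)
      invFun := ((g⁻¹ : GL n R) *ᵥ ·)
      left_inv v := by simp [mulVec_mulVec]
      right_inv v := by simp [mulVec_mulVec] }
  map_one' := by ext; simp
  map_mul' g h := by ext; simp [mulVec_mulVec]

@[simp]
theorem toPerm_apply (g : GL n R) (v : n → R) : toPerm g v = (g : Matrix n n R) *ᵥ v :=
  rfl

variable {K : Type*} [Field K]

theorem monoidHom_eq_one_of_transvection_of_diagonal {G : Type*} [Monoid G] (f : GL n K →* G)
    (htransvec : ∀ (g : GL n K) (t : TransvectionStruct n K), (g : Matrix n n K) = t.toMatrix →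
      f g = 1)
    (hdiag : ∀ (g : GL n K) (D : n → K), (g : Matrix n n K) = diagonal D → f g = 1)
    (g : GL n K) : f g = 1 := by
  refine diagonal_transvection_induction_of_det_ne_zero
    (fun A ↦ ∀ g : GL n K, (g : Matrix n n K) = A → f g = 1) g (g.isUnit.map detMonoidHom).ne_zero
    (fun D _ g ↦ hdiag g D) (fun t g ↦ htransvec g t) ?_ g rfl
  intro A B hA hB hfA hfB g hg
  obtain ⟨a, rfl⟩ := (isUnit_iff_isUnit_det A).mpr (isUnit_iff_ne_zero.mpr hA)
  obtain ⟨b, rfl⟩ := (isUnit_iff_isUnit_det B).mpr (isUnit_iff_ne_zero.mpr hB)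
  rw [show g = a * b from Units.ext hg, map_mul, hfA a rfl, hfB b rfl, one_mul]

theorem pow_card_sub_one_eq_one_of_diagonal [Fintype K] {g : GL n K} {D : n → K}
    (hg : (g : Matrix n n K) = diagonal D) : g ^ (Fintype.card K - 1) = 1 := by
  have hD : ∀ i, D i ≠ 0 := by
    have := hg ▸ (g.isUnit.map detMonoidHom)
    simpa [Finset.prod_ne_zero_iff] using this.ne_zero
  ext1
  rw [Units.val_pow_eq_pow_val, hg, diagonal_pow, Units.val_one, ← diagonal_one]
  congr 1
  funext i
  exact FiniteField.pow_card_sub_one_eq_one _ (hD i)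

theorem sq_eq_one_of_transvection [CharP K 2] {g : GL n K} {t : TransvectionStruct n K}
    (hg : (g : Matrix n n K) = t.toMatrix) : g ^ 2 = 1 := by
  ext1
  rw [Units.val_pow_eq_pow_val, hg, sq, TransvectionStruct.toMatrix,
    transvection_mul_transvection_same _ _ t.hij, CharTwo.add_self_eq_zero, transvection_zero,
    Units.val_one]

theorem support_toPerm_of_transvection [Fintype K] [DecidableEq K] {g : GL n K}
    {t : TransvectionStruct n K} (hg : (g : Matrix n n K) = t.toMatrix) (hc : t.c ≠ 0) :
    (toPerm g).support = ({v | v t.j ≠ 0} : Finset (n → K)) := by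
  ext v
  simp [hg, TransvectionStruct.toMatrix, transvection_mulVec, hc]

variable [Fintype K] [DecidableEq K] [CharP K 2]

theorem sign_toPerm_of_transvection (hK : Fintype.card K ≠ 2 ∨ Fintype.card n ≠ 2) {g : GL n K}
    {t : TransvectionStruct n K} (hg : (g : Matrix n n K) = t.toMatrix) :
    Perm.sign (toPerm g) = 1 := by
  rcases eq_or_ne t.c 0 with hc | hc
  · rw [show g = 1 from Units.ext (by rw [hg, TransvectionStruct.toMatrix, hc, transvection_zero,
      Units.val_one]), map_one, map_one]
  have hn : 2 ≤ Fintype.card n := Fintype.one_lt_card_iff.mpr ⟨t.i, t.j, t.hij⟩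
  have h4 := FiniteField.four_dvd_card_pow hn hK
  obtain ⟨m, hm⟩ : 4 ∣ #(toPerm g).support := by
    rw [support_toPerm_of_transvection hg hc, Fintype.card_filter_apply_ne_zero]
    exact Nat.dvd_sub (h4.trans (pow_dvd_pow _ (Nat.sub_le _ _))) h4
  rw [Perm.sign_of_sq_eq_one (by rw [← map_pow, sq_eq_one_of_transvection hg, map_one]), hm,
    show 4 * m / 2 = 2 * m by omega, pow_mul, Int.units_sq, one_pow]

theorem sign_toPerm_eq_one (hK : Fintype.card K ≠ 2 ∨ Fintype.card n ≠ 2) (g : GL n K) :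
    Perm.sign (toPerm g) = 1 := by
  have hodd : Odd (Fintype.card K - 1) :=
    Nat.Even.sub_odd Fintype.card_pos
      (Nat.even_iff.mpr (FiniteField.even_card_of_char_two (ringChar.eq K 2))) odd_one
  refine monoidHom_eq_one_of_transvection_of_diagonal (Perm.sign.comp toPerm)
    (fun g t hg ↦ sign_toPerm_of_transvection hK hg) (fun g D hg ↦ ?_) g
  refine Int.units_eq_one_of_pow_eq_one_of_odd hodd ?_
  rw [← map_pow, pow_card_sub_one_eq_one_of_diagonal hg, map_one]

end GeneralLinearGroup

end Matrix

open Matrix.GeneralLinearGroup in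
theorem GL_even_on_nonzero_vectors_char_two_general
    (q n : ℕ) (Fq : Type) [Field Fq] [Fintype Fq] (hq : Fintype.card Fq = q)
    (h2 : ∃ e : ℕ, 0 < e ∧ q = 2 ^ e)
    (hexc : ¬(q = 2 ∧ n = 2))
    (g : Matrix.GeneralLinearGroup (Fin n) Fq) :
    haveI : DecidableEq {v : Fin n → Fq // v ≠ 0} := Classical.decEq _
    haveI : Fintype {v : Fin n → Fq // v ≠ 0} := Fintype.ofFinite _
    ∃ π : Equiv.Perm {v : Fin n → Fq // v ≠ 0},
      (∀ v : {v : Fin n → Fq // v ≠ 0},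
        (π v : Fin n → Fq) = Matrix.mulVec (g : Matrix (Fin n) (Fin n) Fq) (v : Fin n → Fq)) ∧
      Equiv.Perm.sign π = 1 := by
  classical
  obtain ⟨e, he, rfl⟩ := h2
  have : CharP Fq 2 := ringChar.of_eq (FiniteField.even_card_iff_char_two.mpr
    (by rw [hq, Nat.pow_mod]; simp [he.ne']))
  have hzero : ∀ v, toPerm g v ≠ 0 ↔ v ≠ 0 := fun v ↦
    not_congr ((toPerm g).injective.eq_iff' (by simp))
  refine ⟨(toPerm g).subtypePerm hzero, fun v ↦ rfl, ?_⟩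
  convert (toPerm g).sign_subtypePerm (p := (· ≠ 0)) hzero fun v hv ↦ by rintro rfl; simp at hv
  exact (sign_toPerm_eq_one (by rw [hq, Fintype.card_fin]; tauto) g).symm

/-- Let `q` be a power of `2`, `n ≥ 1`, and `(q, n) ≠ (2, 2)`. Then every
element of `GL(n, q)`, in its natural action on the `qⁿ − 1` nonzero vectors of `F_qⁿ`,
induces an even permutation of `F_qⁿ \\ {0}`. -/
theorem GL_even_on_nonzero_vectors_char_two
    (q n : ℕ) (Fq : Type) [Field Fq] [Fintype Fq] (hq : Fintype.card Fq = q)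
    (h2 : ∃ e : ℕ, 0 < e ∧ q = 2 ^ e) (hn : 1 ≤ n)
    (hexc : ¬(q = 2 ∧ n = 2))
    (g : Matrix.GeneralLinearGroup (Fin n) Fq) :
    haveI : DecidableEq {v : Fin n → Fq // v ≠ 0} := Classical.decEq _
    haveI : Fintype {v : Fin n → Fq // v ≠ 0} := Fintype.ofFinite _
    ∃ π : Equiv.Perm {v : Fin n → Fq // v ≠ 0},
      (∀ v : {v : Fin n → Fq // v ≠ 0},
        (π v : Fin n → Fq) = Matrix.mulVec (g : Matrix (Fin n) (Fin n) Fq) (v : Fin n → Fq)) ∧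
      Equiv.Perm.sign π = 1 :=
  GL_even_on_nonzero_vectors_char_two_general q n Fq hq h2 hexc g
end

section
/- Let q be a prime power, n ≥ 1, and let L(x) ∈ F_q[x] be a monic q-linearized polynomial of q-degree n. Then the polynomial (L(x) + t·x)/x = L(x)/x + t, of degree q^n − 1, is irreducible over the rational function field F_q(t). Consequently, q^n − 1 divides the order of the Galois group of L(x) + t·x over F_q(t). -/
/-!
Viewed as a polynomial in the two variables `x` and `t`, `G(x) + t` has degree one in `t`, hence is
irreducible in `F_q[t][x]`; it is monic in `x`, so Gauss's lemma keeps it irreducible over `F_q(t)`.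
Its `x`-derivative has leading term `(qⁿ - 1) x^(qⁿ-2) = -x^(qⁿ-2)`, so it is separable, and its
Galois group acts transitively on its `qⁿ - 1` roots. Finally `L(x) + t x = x (G(x) + t)`, and the
Galois group of a polynomial surjects onto that of any of its factors.
-/

open Polynomial

namespace Polynomial

theorem degree_sum_range_C_mul_X_pow_lt {R : Type*} [Semiring R] {e : ℕ → ℕ}
    (he : StrictMono e) (a : ℕ → R) (n : ℕ) :
    (∑ i ∈ Finset.range n, C (a i) * X ^ e i).degree < (e n : WithBot ℕ) := by
  refine (degree_sum_le _ _).trans_lt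
    ((Finset.sup_lt_iff (WithBot.bot_lt_coe _)).2 fun i hi ↦ ?_)
  exact (degree_C_mul_X_pow_le _ _).trans_lt
    (WithBot.coe_lt_coe.2 (he (Finset.mem_range.1 hi)))

theorem sum_range_succ_C_mul_X_pow_eq_X_pow_add {R : Type*} [Semiring R] {a : ℕ → R} {n : ℕ}
    (e : ℕ → ℕ) (ha : a n = 1) :
    ∑ i ∈ Finset.range (n + 1), C (a i) * X ^ e i
      = X ^ e n + ∑ i ∈ Finset.range n, C (a i) * X ^ e i := by
  rw [Finset.sum_range_succ, ha, C_1, one_mul, add_comm]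

theorem monic_sum_range_C_mul_X_pow {R : Type*} [Semiring R] {e : ℕ → ℕ} (he : StrictMono e)
    {a : ℕ → R} {n : ℕ} (ha : a n = 1) :
    (∑ i ∈ Finset.range (n + 1), C (a i) * X ^ e i).Monic := by
  rw [sum_range_succ_C_mul_X_pow_eq_X_pow_add e ha]
  exact monic_X_pow_add (degree_sum_range_C_mul_X_pow_lt he a n)

theorem natDegree_sum_range_C_mul_X_pow {R : Type*} [Semiring R] [Nontrivial R] {e : ℕ → ℕ}
    (he : StrictMono e) {a : ℕ → R} {n : ℕ} (ha : a n = 1) :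
    (∑ i ∈ Finset.range (n + 1), C (a i) * X ^ e i).natDegree = e n := by
  rw [sum_range_succ_C_mul_X_pow_eq_X_pow_add e ha, natDegree_add_eq_left_of_degree_lt,
    natDegree_X_pow]
  simpa using degree_sum_range_C_mul_X_pow_lt he a n

theorem X_mul_sum_C_mul_X_pow_pred {R ι : Type*} [Semiring R] (s : Finset ι) (a : ι → R)
    {e : ι → ℕ} (he : ∀ i ∈ s, e i ≠ 0) :
    X * ∑ i ∈ s, C (a i) * X ^ (e i - 1) = ∑ i ∈ s, C (a i) * X ^ e i := by
  rw [Finset.mul_sum]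
  refine Finset.sum_congr rfl fun i hi ↦ ?_
  rw [X_mul, mul_assoc, ← pow_succ, Nat.sub_add_cancel (Nat.one_le_iff_ne_zero.2 (he i hi))]

theorem Monic.derivative_ne_zero {R : Type*} [Semiring R] {f : R[X]} (hf : f.Monic)
    (h : (f.natDegree : R) ≠ 0) : derivative f ≠ 0 := by
  have hpos : f.natDegree - 1 + 1 = f.natDegree :=
    Nat.sub_add_cancel (Nat.one_le_iff_ne_zero.2 fun h0 ↦ h (by simp [h0]))
  intro h0
  have := coeff_derivative f (f.natDegree - 1)
  rw [h0, coeff_zero, ← Nat.cast_add_one, hpos, hf.coeff_natDegree, one_mul] at this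
  exact h this.symm

theorem irreducible_map_C_add_C_X {R : Type*} [CommRing R] [IsDomain R] (g : R[X]) :
    Irreducible (g.map C + C X : R[X][X]) := by
  rw [← MulEquiv.irreducible_iff Bivariate.swap, map_add, Bivariate.swap_map_C,
    Bivariate.swap_X, add_comm]
  exact (monic_X_add_C g).irreducible_of_degree_eq_one (degree_X_add_C g)

theorem irreducible_map_add_C_ratFuncX {K : Type*} [Field K] {g : K[X]} (hg : g.Monic)
    (hdeg : 0 < g.natDegree) :
    Irreducible (g.map (algebraMap K (RatFunc K)) + C RatFunc.X) := by
  have hmonic : (g.map C + C X : K[X][X]).Monic := by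
    refine (hg.map C).add_of_left (degree_C_le.trans_lt ?_)
    rwa [degree_map, degree_eq_natDegree hg.ne_zero, Nat.cast_pos]
  have hmap : (g.map C + C X : K[X][X]).map (algebraMap K[X] (RatFunc K))
      = g.map (algebraMap K (RatFunc K)) + C RatFunc.X := by
    rw [Polynomial.map_add, map_map, ← algebraMap_eq, ← IsScalarTower.algebraMap_eq, map_C,
      RatFunc.algebraMap_X]
  rw [← hmap, ← hmonic.irreducible_iff_irreducible_map_fraction_map]
  exact irreducible_map_C_add_C_X g

theorem separable_map_add_C {K L : Type*} [Field K] [Field L] (f : K →+* L) {g : K[X]} (c : L)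
    (hirr : Irreducible (g.map f + C c)) (hg : derivative g ≠ 0) : (g.map f + C c).Separable := by
  rw [separable_iff_derivative_ne_zero hirr, derivative_add, derivative_C, add_zero,
    derivative_map]
  exact (Polynomial.map_ne_zero_iff f.injective).2 hg

theorem Gal.natDegree_dvd_card {F : Type*} [Field F] {p : F[X]} (hirr : Irreducible p)
    (hsep : p.Separable) : p.natDegree ∣ Nat.card p.Gal := by
  have : Fact ((p.map (algebraMap F p.SplittingField)).Splits) := ⟨SplittingField.splits p⟩
  -- instance search would find `Gal.galActionAux`, not the action of `galAction_isPretransitive`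
  let := Gal.galAction p p.SplittingField
  have := Gal.galAction_isPretransitive p p.SplittingField hirr
  have hcard := card_rootSet_eq_natDegree hsep (SplittingField.splits p)
  obtain ⟨x⟩ : Nonempty (p.rootSet p.SplittingField) :=
    Fintype.card_pos_iff.1 (hcard ▸ hirr.natDegree_pos)
  rw [← hcard, ← Nat.card_eq_fintype_card, ← MulAction.index_stabilizer_of_transitive p.Gal x]
  exact Subgroup.index_dvd_card _

theorem Gal.card_dvd_card_of_dvd {F : Type*} [Field F] {p q : F[X]} (hpq : p ∣ q) (hq : q ≠ 0) :
    Nat.card p.Gal ∣ Nat.card q.Gal :=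
  Subgroup.card_dvd_of_surjective _ (Gal.restrictDvd_surjective hpq hq)

end Polynomial

theorem FiniteField.cast_card_pow_sub_one (K : Type*) [Field K] [Fintype K] {n : ℕ}
    (hn : n ≠ 0) :
    ((Fintype.card K ^ n - 1 : ℕ) : K) = -1 := by
  rw [Nat.cast_sub (Nat.one_le_pow _ _ Fintype.card_pos), Nat.cast_pow, cast_card_eq_zero,
    zero_pow hn, Nat.cast_one, zero_sub]

/-- Let `q` be a prime power, `n ≥ 1`, and `L(x) ∈ F_q[x]` a monic
`q`-linearized polynomial of `q`-degree `n`. Then `(L(x) + t·x)/x = L(x)/x + t`, a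
polynomial of degree `qⁿ − 1`, is irreducible over `F_q(t)`; consequently `qⁿ − 1`
divides the order of the Galois group of `L(x) + t·x` over `F_q(t)`. -/
theorem linearized_div_X_add_t_irreducible
    (q n : ℕ) (Fq : Type) [Field Fq] [Fintype Fq] (hq : Fintype.card Fq = q)
    (hn : 1 ≤ n)
    (a : ℕ → Fq) (L G : Polynomial Fq)
    (hL : L = ∑ i ∈ Finset.range (n + 1), Polynomial.C (a i) * Polynomial.X ^ q ^ i)
    (hG : G = ∑ i ∈ Finset.range (n + 1), Polynomial.C (a i) * Polynomial.X ^ (q ^ i - 1))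
    (hmonic : a n = 1) :
    Irreducible (G.map (algebraMap Fq (RatFunc Fq)) + Polynomial.C (RatFunc.X : RatFunc Fq)) ∧
    (q ^ n - 1) ∣
      Nat.card (L.map (algebraMap Fq (RatFunc Fq)) +
        Polynomial.C (RatFunc.X : RatFunc Fq) * Polynomial.X).Gal := by
  have hq1 : 1 < q := hq ▸ Fintype.one_lt_card
  have hexp : StrictMono fun i ↦ q ^ i - 1 := fun _ _ hij ↦
    Nat.sub_lt_sub_right (Nat.one_le_pow _ _ (by omega)) (Nat.pow_lt_pow_right hq1 hij)
  have hGmonic : G.Monic := hG ▸ monic_sum_range_C_mul_X_pow hexp hmonic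
  have hGdeg : G.natDegree = q ^ n - 1 := hG ▸ natDegree_sum_range_C_mul_X_pow hexp hmonic
  have hLG : L = X * G := by
    rw [hL, hG, X_mul_sum_C_mul_X_pow_pred _ _ fun i _ ↦ (pow_pos (by omega) i).ne']
  have hirr := irreducible_map_add_C_ratFuncX hGmonic
    (hGdeg ▸ Nat.sub_pos_of_lt (Nat.one_lt_pow (by omega) hq1))
  have hGder : derivative G ≠ 0 := hGmonic.derivative_ne_zero <| by
    rw [hGdeg, ← hq, FiniteField.cast_card_pow_sub_one Fq (by omega)]
    exact neg_ne_zero.2 one_ne_zero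
  have hsep := separable_map_add_C _ _ hirr hGder
  refine ⟨hirr, ?_⟩
  have hfactor : L.map (algebraMap Fq (RatFunc Fq)) + C RatFunc.X * X
      = (G.map (algebraMap Fq (RatFunc Fq)) + C RatFunc.X) * X := by
    rw [hLG, Polynomial.map_mul, map_X]
    ring
  calc q ^ n - 1 = (G.map (algebraMap Fq (RatFunc Fq)) + C RatFunc.X).natDegree := by
        rw [natDegree_add_C, natDegree_map, hGdeg]
    _ ∣ _ := Gal.natDegree_dvd_card hirr hsep
    _ ∣ _ := hfactor ▸ Gal.card_dvd_card_of_dvd (dvd_mul_right _ X)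
        (mul_ne_zero hirr.ne_zero X_ne_zero)
end
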